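/- arXiv:2304.06935 — 2 statements merged into one kernel-verified Lean document; each statement's English description precedes it below -/
import Mathlib

section
/- Let I be a nonzero ideal of k[x_1,...,x_n] with a fixed global monomial ordering, and let G = {g_1,...,g_m} ⊆ I be a finite set such that the leading terms of g_1,...,g_m generate the leading term ideal of I. Then G generates I. -/
open MvPolynomial

/-- A global monomial ordering on the monomials of `k[x_1,…,x_n]`,
identified with exponent vectors `Fin n →₀ ℕ`. -/
structure MonOrd (n : ℕ) where
  lt : (Fin n →₀ ℕ) → (Fin n →₀ ℕ) → Prop
  strict : IsStrictTotalOrder (Fin n →₀ ℕ) lt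
  compat : ∀ a b c, lt a b → lt (a + c) (b + c)
  global : ∀ a, a ≠ 0 → lt 0 a

noncomputable def MonOrd.linOrd {n : ℕ} (mo : MonOrd n) :
    LinearOrder (Fin n →₀ ℕ) :=
  haveI := mo.strict
  haveI := Classical.decRel mo.lt
  linearOrderOfSTO mo.lt

variable {n : ℕ} {k : Type*} [Field k]

/-- Leading monomial (junk value `0` for the zero polynomial). -/
noncomputable def lmon (mo : MonOrd n) (f : MvPolynomial (Fin n) k) : Fin n →₀ ℕ :=
  letI := mo.linOrd
  if h : f.support.Nonempty then f.support.max' h else 0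

/-- Leading term. -/
noncomputable def lterm (mo : MonOrd n) (f : MvPolynomial (Fin n) k) :
    MvPolynomial (Fin n) k :=
  monomial (lmon mo f) (f.coeff (lmon mo f))

/-- The leading term ideal of `I`. -/
noncomputable def ltIdeal (mo : MonOrd n) (I : Ideal (MvPolynomial (Fin n) k)) :
    Ideal (MvPolynomial (Fin n) k) :=
  Ideal.span { p | ∃ f ∈ I, f ≠ 0 ∧ p = lterm mo f }

/-- The S-polynomial of `f` and `g`. -/
noncomputable def spoly (mo : MonOrd n) (f g : MvPolynomial (Fin n) k) :
    MvPolynomial (Fin n) k :=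
  (monomial ((lmon mo f ⊔ lmon mo g) - lmon mo f) (f.coeff (lmon mo f))⁻¹) * f -
  (monomial ((lmon mo f ⊔ lmon mo g) - lmon mo g) (g.coeff (lmon mo g))⁻¹) * g

/-- `p` has a standard representation with respect to the finite set `G`:
`p = ∑ h_g g` with `lm (h_g g) ≤ lm p` whenever `h_g g ≠ 0`. -/
def stdRep (mo : MonOrd n) (G : Finset (MvPolynomial (Fin n) k))
    (p : MvPolynomial (Fin n) k) : Prop :=
  ∃ h : MvPolynomial (Fin n) k → MvPolynomial (Fin n) k,
    p = ∑ g ∈ G, h g * g ∧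
    ∀ g ∈ G, h g * g ≠ 0 → ¬ mo.lt (lmon mo p) (lmon mo (h g * g))

/-!
Dickson's lemma makes a global monomial ordering a well-order, so we may argue by induction on
the leading monomial of `f ∈ I`. Since `lt(f) ∈ lt(I) = ⟨lt(g_1), …, lt(g_m)⟩` is a monomial ideal,
some `lm(g_i)` divides `lm(f)`; subtracting the matching multiple of `g_i` cancels the leading
term and stays in `I`, so the remainder lies in `⟨G⟩` by induction, hence so does `f`.
-/

namespace MonOrd

variable (mo : MonOrd n)

theorem lt_add_right_iff {a b : Fin n →₀ ℕ} (c : Fin n →₀ ℕ) :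
    mo.lt (a + c) (b + c) ↔ mo.lt a b := by
  have := mo.strict
  refine ⟨fun h => ?_, mo.compat a b c⟩
  rcases trichotomous_of mo.lt a b with hab | rfl | hba
  · exact hab
  · exact absurd h (irrefl _)
  · exact absurd (trans_of mo.lt h (mo.compat b a c hba)) (irrefl _)

theorem not_lt_of_le {a b : Fin n →₀ ℕ} (h : a ≤ b) : ¬ mo.lt b a := by
  have := mo.strict
  intro hba
  have h0 : mo.lt (0 + a) (b - a + a) := mo.compat 0 (b - a) a (mo.global _ fun hc =>
    (ne_of_irrefl hba) (le_antisymm (tsub_eq_zero_iff_le.mp hc) h))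
  rw [zero_add, tsub_add_cancel_of_le h] at h0
  exact irrefl _ (trans_of mo.lt h0 hba)

theorem wellFounded : WellFounded mo.lt := by
  have := mo.strict
  rw [RelEmbedding.wellFounded_iff_isEmpty]
  refine ⟨fun e => ?_⟩
  obtain ⟨i, j, hij, hle⟩ := wellQuasiOrdered_le (fun i => e i)
  exact mo.not_lt_of_le hle (e.map_rel_iff.mpr hij)

end MonOrd

section LeadingMonomial

variable (mo : MonOrd n)

theorem lmon_mem_support {f : MvPolynomial (Fin n) k} (hf : f ≠ 0) :
    lmon mo f ∈ f.support := by
  let := mo.linOrd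
  rw [lmon, dif_pos (support_nonempty.mpr hf)]
  exact Finset.max'_mem _ _

theorem coeff_lmon_ne_zero {f : MvPolynomial (Fin n) k} (hf : f ≠ 0) :
    f.coeff (lmon mo f) ≠ 0 :=
  mem_support_iff.mp (lmon_mem_support mo hf)

theorem not_lmon_lt_of_mem_support {f : MvPolynomial (Fin n) k} {d : Fin n →₀ ℕ}
    (hd : d ∈ f.support) : ¬ mo.lt (lmon mo f) d := by
  let := mo.linOrd
  rw [lmon, dif_pos ⟨d, hd⟩]
  exact not_lt.mpr (Finset.le_max' _ _ hd)

theorem coeff_eq_zero_of_lmon_lt {f : MvPolynomial (Fin n) k} {d : Fin n →₀ ℕ}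
    (hd : mo.lt (lmon mo f) d) : f.coeff d = 0 :=
  notMem_support_iff.mp fun h => not_lmon_lt_of_mem_support mo h hd

theorem lmon_lt_of_coeff_eq_zero {f : MvPolynomial (Fin n) k} (hf : f ≠ 0)
    {L : Fin n →₀ ℕ} (h : ∀ d, ¬ mo.lt d L → f.coeff d = 0) : mo.lt (lmon mo f) L := by
  by_contra hL
  exact coeff_lmon_ne_zero mo hf (h _ hL)

theorem coeff_monomial_mul_eq_zero_of_lt {g : MvPolynomial (Fin n) k} {δ d : Fin n →₀ ℕ}
    (c : k) (hd : mo.lt (lmon mo g + δ) d) : (monomial δ c * g).coeff d = 0 := by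
  rw [coeff_monomial_mul']
  split_ifs with hδd
  · rw [← tsub_add_cancel_of_le hδd, mo.lt_add_right_iff] at hd
    rw [coeff_eq_zero_of_lmon_lt mo hd, mul_zero]
  · rfl

theorem lmon_sub_monomial_mul_lt {f g : MvPolynomial (Fin n) k} (hg : g ≠ 0)
    (hle : lmon mo g ≤ lmon mo f)
    (hne : f - monomial (lmon mo f - lmon mo g)
      (f.coeff (lmon mo f) / g.coeff (lmon mo g)) * g ≠ 0) :
    mo.lt (lmon mo (f - monomial (lmon mo f - lmon mo g)
      (f.coeff (lmon mo f) / g.coeff (lmon mo g)) * g)) (lmon mo f) := by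
  have := mo.strict
  have hsum : lmon mo g + (lmon mo f - lmon mo g) = lmon mo f := add_tsub_cancel_of_le hle
  refine lmon_lt_of_coeff_eq_zero mo hne fun d hd => ?_
  rcases trichotomous_of mo.lt (lmon mo f) d with hlt | rfl | hgt
  · rw [coeff_sub, coeff_eq_zero_of_lmon_lt mo hlt,
      coeff_monomial_mul_eq_zero_of_lt mo _ (by rwa [hsum]), sub_zero]
  · rw [coeff_sub, coeff_monomial_mul', if_pos tsub_le_self, tsub_tsub_cancel_of_le hle,
      div_mul_cancel₀ _ (coeff_lmon_ne_zero mo hg), sub_self]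
  · exact absurd hgt hd

theorem exists_lmon_le_of_lterm_mem_span {ι : Type*} (g : ι → MvPolynomial (Fin n) k)
    {f : MvPolynomial (Fin n) k} (hf : f ≠ 0)
    (h : lterm mo f ∈ Ideal.span (Set.range fun i => lterm mo (g i))) :
    ∃ i, g i ≠ 0 ∧ lmon mo (g i) ≤ lmon mo f := by
  set S : Set (Fin n →₀ ℕ) := {s | ∃ i, g i ≠ 0 ∧ s = lmon mo (g i)}
  have hspan : Ideal.span (Set.range fun i => lterm mo (g i)) ≤
      Ideal.span ((fun s => monomial s (1 : k)) '' S) := by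
    rw [Ideal.span_le]
    rintro _ ⟨i, rfl⟩
    by_cases hgi : g i = 0
    · simp [lterm, hgi]
    · change lterm mo (g i) ∈ _
      rw [SetLike.mem_coe, lterm, ← mul_one ((g i).coeff _), ← C_mul_monomial]
      exact Ideal.mul_mem_left _ _ (Ideal.subset_span ⟨_, ⟨i, hgi, rfl⟩, rfl⟩)
  obtain ⟨_, ⟨i, hgi, rfl⟩, hle⟩ := mem_ideal_span_monomial_image.mp (hspan h) (lmon mo f)
    (by classical
        rw [lterm, support_monomial, if_neg (coeff_lmon_ne_zero mo hf)]
        exact Finset.mem_singleton_self _)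
  exact ⟨i, hgi, hle⟩

theorem le_span_of_forall_exists_lmon_le {ι : Type*} {I : Ideal (MvPolynomial (Fin n) k)} (g : ι → MvPolynomial (Fin n) k)
    (hsub : ∀ i, g i ∈ I) (hdiv : ∀ f ∈ I, f ≠ 0 → ∃ i, g i ≠ 0 ∧ lmon mo (g i) ≤ lmon mo f) :
    I ≤ Ideal.span (Set.range g) := by
  intro f
  induction f using (InvImage.wf (lmon mo) mo.wellFounded).induction with
  | _ f IH =>
    intro hfI
    by_cases hf : f = 0
    · exact hf ▸ Ideal.zero_mem _
    obtain ⟨i, hgi, hle⟩ := hdiv f hfI hf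
    set q := monomial (lmon mo f - lmon mo (g i))
      (f.coeff (lmon mo f) / (g i).coeff (lmon mo (g i))) * g i
    have hq : q ∈ Ideal.span (Set.range g) := Ideal.mul_mem_left _ _ (Ideal.subset_span ⟨i, rfl⟩)
    have hrem : f - q ∈ Ideal.span (Set.range g) := by
      by_cases hne : f - q = 0
      · exact hne ▸ Ideal.zero_mem _
      exact IH _ (lmon_sub_monomial_mul_lt mo hgi hle hne)
        (I.sub_mem hfI (I.mul_mem_left _ (hsub i)))
    simpa using Ideal.add_mem _ hrem hq

end LeadingMonomial

theorem stmt4_general (mo : MonOrd n) (I : Ideal (MvPolynomial (Fin n) k))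
    (m : ℕ) (g : Fin m → MvPolynomial (Fin n) k) (hsub : ∀ i, g i ∈ I)
    (hlt : Ideal.span (Set.range fun i => lterm mo (g i)) = ltIdeal mo I) :
    Ideal.span (Set.range g) = I := by
  refine le_antisymm (Ideal.span_le.mpr (Set.range_subset_iff.mpr hsub)) ?_
  refine le_span_of_forall_exists_lmon_le mo g hsub fun f hfI hf => ?_
  refine exists_lmon_le_of_lterm_mem_span mo g hf ?_
  rw [hlt]
  exact Ideal.subset_span ⟨f, hfI, hf, rfl⟩

/-- If `G = {g_1,…,g_m} ⊆ I` is such that the leading terms of the `g_i` generate the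
leading term ideal of the nonzero ideal `I`, then `G` generates `I`. -/
theorem stmt4 (mo : MonOrd n) (I : Ideal (MvPolynomial (Fin n) k)) (hI : I ≠ ⊥)
    (m : ℕ) (g : Fin m → MvPolynomial (Fin n) k) (hsub : ∀ i, g i ∈ I)
    (hlt : Ideal.span (Set.range fun i => lterm mo (g i)) = ltIdeal mo I) :
    Ideal.span (Set.range g) = I :=
  stmt4_general mo I m g hsub hlt
end

section
/- (First Buchberger criterion) If f and g are nonzero polynomials whose leading monomials are coprime (i.e., lcm(lm f, lm g) = lm(f)·lm(g)), then Spoly(f, g) reduces to zero modulo {f, g}. -/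
open MvPolynomial

variable {n : ℕ} {k : Type*} [Field k]

/-! If `lm f` and `lm g` are coprime, the S-polynomial is, up to the scalar `(lc f · lc g)⁻¹`,
`(f - lt f) · g - (g - lt g) · f`. The two products have distinct leading monomials:
`lm (f - lt f) + lm g = lm (g - lt g) + lm f` and coprimality would give `lm f ∣ lm (f - lt f)`,
contradicting `lm (f - lt f) < lm f`. So no cancellation happens between them, and neither has a
leading monomial above that of the S-polynomial.

By Dickson's lemma a `MonOrd` is a well-order, i.e. a Mathlib `MonomialOrder`, and `lmon` is its
`degree`. -/

open scoped MonomialOrder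

namespace MonomialOrder

variable {σ R : Type*} {m : MonomialOrder σ}

theorem degree_le_degree_add [CommSemiring R] {a b : MvPolynomial σ R}
    (h : a ≠ 0 → b ≠ 0 → m.degree a ≠ m.degree b) :
    m.degree a ≼[m] m.degree (a + b) := by
  by_cases ha : a = 0
  · simp [ha]
  by_cases hb : b = 0
  · simp [hb]
  rw [degree_add_of_ne (h ha hb)]
  exact le_sup_left

section CommRing

variable [CommRing R] {f g : MvPolynomial σ R}

theorem sPolynomial_eq_of_degree_sup_eq_add
    (hcop : m.degree f ⊔ m.degree g = m.degree f + m.degree g) :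
    m.sPolynomial f g = (f - m.leadingTerm f) * g - (g - m.leadingTerm g) * f := by
  rw [sPolynomial_def, hcop, add_tsub_cancel_left, add_tsub_cancel_right]
  simp only [leadingTerm]
  ring

theorem degree_sub_leadingTerm_mul_ne_of_degree_sup_eq_add [NoZeroDivisors R]
    (hcop : m.degree f ⊔ m.degree g = m.degree f + m.degree g)
    (hfg : (f - m.leadingTerm f) * g ≠ 0) (hgf : (g - m.leadingTerm g) * f ≠ 0) :
    m.degree ((f - m.leadingTerm f) * g) ≠ m.degree ((g - m.leadingTerm g) * f) := by
  intro heq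
  rw [degree_mul' hfg, degree_mul' hgf] at heq
  have hlt : m.degree (f - m.leadingTerm f) ≺[m] m.degree f :=
    degree_sub_leadingTerm_lt_degree
      (degree_ne_zero_of_sub_leadingTerm_ne_zero (left_ne_zero_of_mul hfg))
  have hle : m.degree f ≤ m.degree (f - m.leadingTerm f) := fun i => by
    have hi := congr($heq i)
    have hcopi := congr($hcop i)
    simp only [Finsupp.add_apply, Finsupp.sup_apply] at hi hcopi
    omega
  exact (m.toSyn_monotone hle).not_gt hlt

end CommRing

theorem exists_smul_sPolynomial_eq_of_degree_sup_eq_add {K : Type*} [Field K]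
    {f g : MvPolynomial σ K} (hcop : m.degree f ⊔ m.degree g = m.degree f + m.degree g)
    {c : K} (hc : c ≠ 0) :
    ∃ h₁ h₂ : MvPolynomial σ K, c • m.sPolynomial f g = h₁ * f + h₂ * g ∧
      (h₁ * f ≠ 0 → m.degree (h₁ * f) ≼[m] m.degree (c • m.sPolynomial f g)) ∧
      (h₂ * g ≠ 0 → m.degree (h₂ * g) ≼[m] m.degree (c • m.sPolynomial f g)) := by
  have hc' : IsRegular c := (isUnit_iff_ne_zero.2 hc).isRegular
  have hrep : c • m.sPolynomial f g =
      -(c • (g - m.leadingTerm g)) * f + (c • (f - m.leadingTerm f)) * g := by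
    rw [sPolynomial_eq_of_degree_sup_eq_add hcop, smul_sub, neg_mul, smul_mul_assoc,
      smul_mul_assoc]
    abel
  have hne : -(c • (g - m.leadingTerm g)) * f ≠ 0 → (c • (f - m.leadingTerm f)) * g ≠ 0 →
      m.degree (-(c • (g - m.leadingTerm g)) * f) ≠ m.degree ((c • (f - m.leadingTerm f)) * g) := by
    simp only [neg_mul, smul_mul_assoc, neg_ne_zero, smul_ne_zero_iff, ne_eq, hc,
      not_false_eq_true, true_and, degree_neg, degree_smul_of_isRegular hc']
    exact fun hgf hfg => (degree_sub_leadingTerm_mul_ne_of_degree_sup_eq_add hcop hfg hgf).symm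
  refine ⟨_, _, hrep, fun _ => ?_, fun _ => ?_⟩
  · rw [hrep]
    exact degree_le_degree_add hne
  · rw [hrep, add_comm]
    exact degree_le_degree_add fun hfg hgf => (hne hgf hfg).symm

end MonomialOrder

namespace MonOrd

variable (mo : MonOrd n)

def Syn (_ : MonOrd n) : Type := Fin n →₀ ℕ

noncomputable instance : AddCommMonoid mo.Syn := inferInstanceAs (AddCommMonoid (Fin n →₀ ℕ))

noncomputable instance : LinearOrder mo.Syn := mo.linOrd

instance : IsOrderedAddMonoid mo.Syn where
  add_le_add_left a b hab c := by
    rcases hab with rfl | hab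
    · exact le_rfl
    · exact le_of_lt (mo.compat a b c hab)

noncomputable def toSyn : (Fin n →₀ ℕ) ≃+ mo.Syn := AddEquiv.refl _

theorem toSyn_monotone : Monotone mo.toSyn := by
  intro a b hab
  obtain ⟨d, rfl⟩ := exists_add_of_le hab
  rcases eq_or_ne d 0 with rfl | hd
  · rw [add_zero]
  · have := mo.compat 0 d a (mo.global d hd)
    rw [zero_add, add_comm] at this
    exact Or.inr this

instance : WellFoundedLT mo.Syn :=
  have := mo.toSyn_monotone.wellQuasiOrderedLE_of_wellQuasiOrderedLE_of_surjective
    mo.toSyn.surjective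
  inferInstance

noncomputable def toMonomialOrder : MonomialOrder (Fin n) where
  syn := mo.Syn
  toSyn := mo.toSyn
  toSyn_monotone := mo.toSyn_monotone

theorem lt_iff_toMonomialOrder_lt {a b : Fin n →₀ ℕ} :
    mo.lt a b ↔ a ≺[mo.toMonomialOrder] b :=
  Iff.rfl

theorem lmon_eq_degree (f : MvPolynomial (Fin n) k) :
    lmon mo f = mo.toMonomialOrder.degree f := by
  let := mo.linOrd
  unfold lmon
  split_ifs with h
  · apply le_antisymm (α := mo.Syn)
    · exact mo.toMonomialOrder.le_degree (f.support.max'_mem h)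
    · exact f.support.le_max' _ (mo.toMonomialOrder.degree_mem_support (support_nonempty.1 h))
  · rw [Finset.not_nonempty_iff_eq_empty, support_eq_empty] at h
    simp [h]

theorem spoly_eq_smul_sPolynomial {f g : MvPolynomial (Fin n) k} (hf : f ≠ 0) (hg : g ≠ 0) :
    spoly mo f g = (mo.toMonomialOrder.leadingCoeff f * mo.toMonomialOrder.leadingCoeff g)⁻¹ •
      mo.toMonomialOrder.sPolynomial f g := by
  have hcf := mo.toMonomialOrder.coeff_degree_ne_zero_iff.2 hf
  have hcg := mo.toMonomialOrder.coeff_degree_ne_zero_iff.2 hg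
  simp only [spoly, MonomialOrder.sPolynomial_def, MonomialOrder.leadingCoeff, lmon_eq_degree,
    smul_sub, ← smul_mul_assoc, smul_monomial, smul_eq_mul]
  congr 3 <;> field_simp

end MonOrd

/-- First Buchberger criterion: if the leading monomials of nonzero `f` and `g` are
coprime (their lcm is their product), then `Spoly(f, g)` reduces to zero modulo
`{f, g}`: it admits a representation `h₁·f + h₂·g` with
`lm(h₁ f), lm(h₂ g) ≤ lm(Spoly(f, g))`. -/
theorem stmt8 (mo : MonOrd n) (f g : MvPolynomial (Fin n) k) (hf : f ≠ 0) (hg : g ≠ 0)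
    (hcop : lmon mo f ⊔ lmon mo g = lmon mo f + lmon mo g) :
    ∃ h₁ h₂ : MvPolynomial (Fin n) k,
      spoly mo f g = h₁ * f + h₂ * g ∧
      (h₁ * f ≠ 0 → ¬ mo.lt (lmon mo (spoly mo f g)) (lmon mo (h₁ * f))) ∧
      (h₂ * g ≠ 0 → ¬ mo.lt (lmon mo (spoly mo f g)) (lmon mo (h₂ * g))) := by
  set m := mo.toMonomialOrder
  have hc : (m.leadingCoeff f * m.leadingCoeff g)⁻¹ ≠ 0 := by simp [hf, hg]
  rw [mo.lmon_eq_degree, mo.lmon_eq_degree] at hcop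
  obtain ⟨h₁, h₂, hrep, hdeg₁, hdeg₂⟩ := m.exists_smul_sPolynomial_eq_of_degree_sup_eq_add hcop hc
  rw [← mo.spoly_eq_smul_sPolynomial hf hg] at hrep hdeg₁ hdeg₂
  simp only [mo.lt_iff_toMonomialOrder_lt, mo.lmon_eq_degree, not_lt]
  exact ⟨h₁, h₂, hrep, hdeg₁, hdeg₂⟩
end
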